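/- arXiv:2209.08878 — 2 statements merged into one kernel-verified Lean document; each statement's English description precedes it below -/
import Mathlib

section
/- For all n ≥ 1, the Lucas number L_n equals \sum_{j=0}^{\lfloor n/2 \rfloor} \frac{n}{n-j} \binom{n-j}{j}. -/
/-!
For `0 < j < n` one has `j * C(n-j, j) = (n-j) * C(n-j-1, j-1)`, so the `j`-th summand splits as
`C(n-j, j) + C(n-j-1, j-1)`. Summing, the two parts are the diagonal sums of Pascal's triangle
giving `F (n+1)` and `F (n-1)`, and `L n = F (n+1) + F (n-1)`.
-/

def lucas : ℕ → ℕ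
  | 0 => 2
  | 1 => 1
  | n + 2 => lucas (n + 1) + lucas n

open Finset

theorem lucas_eq_fib_add_fib : ∀ {n : ℕ}, n ≠ 0 → lucas n = Nat.fib (n + 1) + Nat.fib (n - 1)
  | 1, _ => rfl
  | 2, _ => rfl
  | n + 3, _ => by
    rw [lucas, lucas_eq_fib_add_fib (n := n + 2) (by omega),
      lucas_eq_fib_add_fib (n := n + 1) (by omega)]
    show Nat.fib (n + 3) + Nat.fib (n + 1) + (Nat.fib (n + 2) + Nat.fib n) =
      Nat.fib (n + 4) + Nat.fib (n + 2)
    rw [Nat.fib_add_two (n := n + 2), Nat.fib_add_two (n := n)]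
    ring

theorem fib_add_one_eq_sum_choose (n : ℕ) :
    Nat.fib (n + 1) = ∑ j ∈ range (n / 2 + 1), (n - j).choose j := by
  rw [Nat.fib_succ_eq_sum_choose, ← Nat.sum_antidiagonal_swap,
    Nat.sum_antidiagonal_eq_sum_range_succ_mk]
  simp only [Prod.fst_swap, Prod.snd_swap]
  refine (sum_subset (range_subset_range.2 (by omega)) fun j hj hj' ↦ ?_).symm
  simp only [mem_range] at hj hj'
  exact Nat.choose_eq_zero_of_lt (by omega)

theorem fib_sub_one_eq_sum_choose :
    ∀ n : ℕ, Nat.fib (n - 1) = ∑ j ∈ range (n / 2), (n - 2 - j).choose j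
  | 0 | 1 => rfl
  | n + 2 => by simpa using fib_add_one_eq_sum_choose n

theorem div_sub_mul_choose_eq {n j : ℕ} (h : j + 1 < n) :
    (n : ℚ) / (n - (j + 1 : ℕ)) * (n - (j + 1)).choose (j + 1) =
      (n - (j + 1)).choose (j + 1) + (n - 2 - j).choose j := by
  obtain ⟨m, rfl⟩ := Nat.exists_eq_add_of_lt h
  rw [show j + 1 + m + 1 - (j + 1) = m + 1 by omega, show j + 1 + m + 1 - 2 - j = m by omega,
    show ((j + 1 + m + 1 : ℕ) : ℚ) - (j + 1 : ℕ) = m + 1 by push_cast; ring]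
  have key : ((m + 1) * m.choose j : ℚ) = (m + 1).choose (j + 1) * (j + 1) := by
    exact_mod_cast Nat.add_one_mul_choose_eq m j
  rw [div_mul_eq_mul_div, div_eq_iff (by positivity)]
  push_cast
  linear_combination -key

theorem lucas_eq_sum (n : ℕ) (hn : 1 ≤ n) :
    (lucas n : ℚ) =
      ∑ j ∈ Finset.range (n / 2 + 1), (n : ℚ) / ((n : ℚ) - (j : ℚ)) * ((n - j).choose j : ℚ) := by
  have hsummand : ∀ j ∈ range (n / 2),
      (n : ℚ) / (n - (j + 1 : ℕ)) * (n - (j + 1)).choose (j + 1) =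
        (n - (j + 1)).choose (j + 1) + (n - 2 - j).choose j := fun j hj ↦
    div_sub_mul_choose_eq (by rw [mem_range] at hj; omega)
  have hzero : (n : ℚ) / (n - (0 : ℕ)) * (n - 0).choose 0 = (n - 0).choose 0 := by
    simp [show (n : ℚ) ≠ 0 by positivity]
  calc (lucas n : ℚ) = Nat.fib (n + 1) + Nat.fib (n - 1) := by
        exact_mod_cast lucas_eq_fib_add_fib (by omega)
    _ = ∑ j ∈ range (n / 2 + 1), ((n - j).choose j : ℚ) +
          ∑ j ∈ range (n / 2), ((n - 2 - j).choose j : ℚ) := by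
        rw [fib_add_one_eq_sum_choose, fib_sub_one_eq_sum_choose]
        push_cast
        rfl
    _ = _ := by
        rw [sum_range_succ', sum_range_succ' _ (n / 2), sum_congr rfl hsummand, sum_add_distrib,
          hzero]
        ring
end

section
/- Rothe's q-binomial theorem: for all n and commuting x, y in a commutative ring containing q, \prod_{i=0}^{n-1} (y + q^i x) = \sum_{k=0}^n q^{\binom{k}{2}} \binom{n}{k}_q x^k y^{n-k}. -/
/-- Gaussian (q-)binomial coefficients. -/
def gbinom {R : Type*} [CommRing R] (q : R) : ℕ → ℕ → R
  | _, 0 => 1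
  | 0, _ + 1 => 0
  | n + 1, k + 1 => q ^ (k + 1) * gbinom q n (k + 1) + gbinom q n k

lemma gbinom_eq_zero {R : Type*} [CommRing R] (q : R) :
    ∀ n k, n < k → gbinom q n k = 0 := by
  intro n
  induction n with
  | zero =>
    intro k hk
    cases k with
    | zero => omega
    | succ k => simp [gbinom]
  | succ n ih =>
    intro k hk
    cases k with
    | zero => omega
    | succ k =>
      rw [gbinom, ih (k+1) (by omega), ih k (by omega)]
      ring

lemma gbinom_zero {R : Type*} [CommRing R] (q : R) {n : ℕ} : gbinom q n 0 = 1 := by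
  cases n <;> rfl

lemma gbinom_pascal {R : Type*} [CommRing R] (q : R) :
    ∀ n k, k ≤ n → gbinom q (n+1) (k+1) = gbinom q n (k+1) + q ^ (n-k) * gbinom q n k := by
  intro n
  induction n with
  | zero =>
    intro k hk
    interval_cases k
    simp [gbinom]
  | succ n ih =>
    intro k hk
    cases k with
    | zero =>
      have h := ih 0 (by omega)
      rw [show gbinom q (n+1) (0+1) = q ^ (0+1) * gbinom q n (0+1) + gbinom q n 0 from rfl] at h
      rw [show gbinom q (n+1+1) (0+1) = q ^ (0+1) * gbinom q (n+1) (0+1) + gbinom q (n+1) 0 from rfl,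
        show gbinom q (n+1) (0+1) = q ^ (0+1) * gbinom q n (0+1) + gbinom q n 0 from rfl,
        gbinom_zero, gbinom_zero]
      rw [gbinom_zero] at h
      simp only [Nat.sub_zero] at h ⊢
      rw [pow_succ]
      linear_combination q * h
    | succ j =>
      rcases Nat.lt_or_ge j n with hj | hj
      · obtain ⟨d, rfl⟩ : ∃ d, n = j + 1 + d := ⟨n - (j+1), by omega⟩
        have h1 := ih (j+1) (by omega)
        have h2 := ih j (by omega)
        -- expand RHS definitionally first
        rw [show gbinom q (j+1+d+1) (j+1+1)
              = q ^ (j+1+1) * gbinom q (j+1+d) (j+1+1) + gbinom q (j+1+d) (j+1) from rfl,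
          show gbinom q (j+1+d+1) (j+1)
              = q ^ (j+1) * gbinom q (j+1+d) (j+1) + gbinom q (j+1+d) j from rfl]
        -- now expand LHS definitionally, then via ih
        rw [show gbinom q (j+1+d+1+1) (j+1+1)
              = q ^ (j+1+1) * gbinom q (j+1+d+1) (j+1+1) + gbinom q (j+1+d+1) (j+1) from rfl,
          h1, h2]
        rw [show j+1+d - (j+1) = d from by omega, show j+1+d - j = d+1 from by omega,
          show j+1+d+1 - (j+1) = d+1 from by omega]
        rw [pow_succ, pow_succ]
        ring
      · have hjn : j = n := by omega
        subst hjn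
        rw [show gbinom q (j+1+1) (j+1+1)
              = q ^ (j+1+1) * gbinom q (j+1) (j+1+1) + gbinom q (j+1) (j+1) from rfl,
          gbinom_eq_zero q (j+1) (j+1+1) (by omega)]
        simp

theorem rothe_q_binomial {R : Type*} [CommRing R] (q x y : R) (n : ℕ) :
    ∏ i ∈ Finset.range n, (y + q ^ i * x) =
      ∑ k ∈ Finset.range (n + 1), q ^ (k.choose 2) * gbinom q n k * x ^ k * y ^ (n - k) := by
  induction n with
  | zero => simp [gbinom]
  | succ n ih =>
    rw [Finset.prod_range_succ, ih]
    rw [Finset.sum_range_succ' (fun k => q ^ (k.choose 2) * gbinom q (n+1) k * x ^ k * y ^ (n + 1 - k)) (n+1)]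
    have hRHS : ∀ i ∈ Finset.range (n+1),
        q ^ ((i+1).choose 2) * gbinom q (n+1) (i+1) * x ^ (i+1) * y ^ (n + 1 - (i+1)) =
        q ^ ((i+1).choose 2) * gbinom q n (i+1) * x ^ (i+1) * y ^ (n - i) +
        q ^ n * (q ^ (i.choose 2) * gbinom q n i * x ^ i * y ^ (n - i)) * x := by
      intro i hi
      rw [Finset.mem_range] at hi
      obtain ⟨d, rfl⟩ : ∃ d, n = i + d := ⟨n - i, by omega⟩
      rw [gbinom_pascal q (i+d) i (by omega)]
      rw [show i + d + 1 - (i+1) = d from by omega, show i + d - i = d from by omega]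
      rw [show (i+1).choose 2 = i.choose 2 + i from by
        rw [Nat.choose_two_right, Nat.choose_two_right, Nat.triangle_succ]]
      rw [pow_add, pow_add, pow_succ]
      ring
    rw [Finset.sum_congr rfl hRHS, Finset.sum_add_distrib]
    rw [Finset.sum_range_succ (fun i => q ^ ((i+1).choose 2) * gbinom q n (i+1) * x ^ (i+1) * y ^ (n - i))]
    rw [gbinom_eq_zero q n (n+1) (by omega)]
    rw [mul_add, Finset.sum_mul, Finset.sum_mul]
    rw [Finset.sum_range_succ' (fun k => (q ^ (k.choose 2) * gbinom q n k * x ^ k * y ^ (n - k)) * y) n]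
    have hA : ∀ i ∈ Finset.range n,
        (q ^ ((i+1).choose 2) * gbinom q n (i+1) * x ^ (i+1) * y ^ (n - (i+1))) * y =
        q ^ ((i+1).choose 2) * gbinom q n (i+1) * x ^ (i+1) * y ^ (n - i) := by
      intro i hi
      rw [Finset.mem_range] at hi
      rw [show n - i = (n - (i+1)) + 1 from by omega, pow_succ]
      ring
    have hB : ∀ k ∈ Finset.range (n+1),
        (q ^ (k.choose 2) * gbinom q n k * x ^ k * y ^ (n - k)) * (q ^ n * x) =
        q ^ n * (q ^ (k.choose 2) * gbinom q n k * x ^ k * y ^ (n - k)) * x :=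
      fun k _ => by ring
    rw [Finset.sum_congr rfl hA, Finset.sum_congr rfl hB]
    simp [gbinom]
    ring
end
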